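/- Let H be a traceless Hermitian operator on (ℂ²)^{⊗n} with Pauli expansion H = Σ_{s≠I^n} Ĥ_s s₁⊗⋯⊗s_n where each term has weight |s| ≤ k (k-locality), and suppose each qubit participates in at most ℓ terms with nonzero coefficient. Then λ_max(H) ≥ 3^{−k/2} ‖Ĥ‖₁ / (4kℓ), where ‖Ĥ‖₁ = Σ_s |Ĥ_s|. Moreover this value is achieved by a tensor product of single-qubit states. -/

import Mathlib

noncomputable section
open Complex Matrix
open scoped Classical

/-- Pauli X matrix. -/
def σX : Matrix (Fin 2) (Fin 2) ℂ := !![0, 1; 1, 0]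
/-- Pauli Y matrix. -/
def σY : Matrix (Fin 2) (Fin 2) ℂ := !![0, -I; I, 0]
/-- Pauli Z matrix. -/
def σZ : Matrix (Fin 2) (Fin 2) ℂ := !![1, 0; 0, -1]

/-- The four Pauli matrices I, X, Y, Z. -/
def pauli : Fin 4 → Matrix (Fin 2) (Fin 2) ℂ := ![1, σX, σY, σZ]

/-- The n-qubit Pauli string s₁ ⊗ s₂ ⊗ ⋯ ⊗ sₙ, as a matrix indexed by Fin n → Fin 2. -/
def pauliString {n : ℕ} (s : Fin n → Fin 4) :
    Matrix (Fin n → Fin 2) (Fin n → Fin 2) ℂ :=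
  fun v w => ∏ i, pauli (s i) (v i) (w i)

/-- The Hamiltonian H = Σ_s Ĥ_s s₁⊗⋯⊗sₙ with real Pauli coefficients Ĥ. -/
def hamOf {n : ℕ} (Hhat : (Fin n → Fin 4) → ℝ) :
    Matrix (Fin n → Fin 2) (Fin n → Fin 2) ℂ :=
  ∑ s : Fin n → Fin 4, (Hhat s : ℂ) • pauliString s

/-- The weight |s| of a Pauli string: the number of non-identity tensor factors. -/
def weight {n : ℕ} (s : Fin n → Fin 4) : ℕ :=
  (Finset.univ.filter (fun i => s i ≠ 0)).card

/-- The product state ψ₁ ⊗ ⋯ ⊗ ψₙ. -/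
def prodState {n : ℕ} (ψ : Fin n → Fin 2 → ℂ) : (Fin n → Fin 2) → ℂ :=
  fun v => ∏ i, ψ i (v i)

/-- Expectation value ⟨Ψ|M|Ψ⟩ for an n-qubit operator. -/
def expValN {n : ℕ} (M : Matrix (Fin n → Fin 2) (Fin n → Fin 2) ℂ)
    (Ψ : (Fin n → Fin 2) → ℂ) : ℂ :=
  ∑ v, ∑ w, (starRingEnd ℂ) (Ψ v) * M v w * Ψ w

/-- The state |ψ₊₊⟩ = (√(3+√3)|0⟩ + e^{iπ/4}√(3-√3)|1⟩)/√6. -/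
def ψpp : Fin 2 → ℂ :=
  ![(Real.sqrt (3 + Real.sqrt 3) : ℂ) / (Real.sqrt 6 : ℂ),
    Complex.exp (Real.pi * I / 4) * (Real.sqrt (3 - Real.sqrt 3) : ℂ) / (Real.sqrt 6 : ℂ)]

/-- Pauli correction selecting a tetrahedron state: (+,+)↦I, (−,+)↦Z, (+,−)↦X, (−,−)↦Y. -/
def tetraM (a b : ℝ) : Matrix (Fin 2) (Fin 2) ℂ :=
  if a = 1 then (if b = 1 then 1 else σX) else (if b = 1 then σZ else σY)

/-- The tetrahedron state labelled by (a,b) ∈ {±1}². -/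
def tetra (a b : ℝ) : Fin 2 → ℂ := (tetraM a b).mulVec ψpp

/-!
Put qubit `i` in the tetrahedron state `tetra a_i b_i`, `a_i, b_i = ±1`. There `X, Y, Z` have
expectations `a_i, a_i b_i, b_i` times `3^{-1/2}`, so `⟨ψ|H|ψ⟩` is a multilinear polynomial `f` in
the `2n` signs with coefficient `Ĥ_s 3^{-|s|/2}` on one monomial per Pauli string `s`; it has
degree `≤ 2k`, and every sign occurs in at most `ℓ` of its monomials.

For such a polynomial of degree `d` the signs can be chosen greedily with
`f ≥ f̂(∅) + W(f) / (2dℓ)`, where `W(f) = ∑_{S ≠ ∅} |f̂(S)|`. Take a heaviest monomial `S` and fix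
its variables so that the constant term grows by at least `|f̂(S)|`: on average over the sign
patterns with `∏_S x = sign f̂(S)` it becomes `f̂(∅) + |f̂(S)|`. Only the at most `dℓ` monomials
meeting `S` are affected; they disappear and their coefficients are added to those of smaller
monomials, so `W` drops by at most twice their mass, `2dℓ |f̂(S)|`. Iterating gives the bound,
and `λ_max(H)` dominates every expectation value.
-/

open Finset

theorem Finset.exists_le_of_mul_sum_le_sum_mul {ι : Type*} {s : Finset ι} {w f : ι → ℝ} {c : ℝ}
    (hw : ∀ i ∈ s, 0 ≤ w i) (hpos : 0 < ∑ i ∈ s, w i)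
    (h : c * ∑ i ∈ s, w i ≤ ∑ i ∈ s, w i * f i) : ∃ i ∈ s, c ≤ f i := by
  by_contra! hlt
  obtain ⟨j, hj, hwj⟩ : ∃ j ∈ s, 0 < w j := by
    simpa using exists_lt_of_sum_lt (by simpa using hpos : ∑ i ∈ s, (0 : ℝ) < _)
  have : ∑ i ∈ s, w i * f i < ∑ i ∈ s, w i * c :=
    sum_lt_sum (fun i hi => mul_le_mul_of_nonneg_left (hlt i hi).le (hw i hi))
      ⟨j, hj, mul_lt_mul_of_pos_left (hlt j hj) hwj⟩
  rw [← sum_mul, mul_comm] at this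
  linarith

theorem Finset.union_sdiff_of_disjoint_of_subset {α : Type*} [DecidableEq α] {U R S : Finset α}
    (hU : Disjoint U S) (hR : R ⊆ S) : (U ∪ R) \ S = U := by
  rw [union_sdiff_distrib, sdiff_eq_empty_iff_subset.mpr hR, union_empty,
    sdiff_eq_self_of_disjoint hU]

namespace Matrix

variable {𝕜 ι : Type*} [RCLike 𝕜] [Fintype ι]

theorem re_star_dotProduct_self (x : ι → 𝕜) : RCLike.re (star x ⬝ᵥ x) = ∑ i, ‖x i‖ ^ 2 := by
  simp only [dotProduct, Pi.star_apply, RCLike.star_def, RCLike.conj_mul, map_sum]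
  simp_rw [← RCLike.ofReal_pow, RCLike.ofReal_re]

theorem star_mulVec_dotProduct_mulVec_mulVec (M P : Matrix ι ι 𝕜) (v : ι → 𝕜) :
    star (M *ᵥ v) ⬝ᵥ (P *ᵥ (M *ᵥ v)) = star v ⬝ᵥ ((Mᴴ * P * M) *ᵥ v) := by
  rw [star_mulVec, ← dotProduct_mulVec, mulVec_mulVec, mulVec_mulVec, Matrix.mul_assoc]

open scoped ComplexOrder in
theorem IsHermitian.re_dotProduct_mulVec_le_iSup_eigenvalues_mul [DecidableEq ι]
    {A : Matrix ι ι 𝕜} (hA : A.IsHermitian) (x : ι → 𝕜) :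
    RCLike.re (star x ⬝ᵥ (A *ᵥ x)) ≤ (⨆ i, hA.eigenvalues i) * RCLike.re (star x ⬝ᵥ x) := by
  set μ := ⨆ i, hA.eigenvalues i
  have hle : ∀ i, hA.eigenvalues i ≤ μ := le_ciSup (Set.finite_range _).bddAbove
  have hpsd : ((μ : 𝕜) • 1 - A).PosSemidef := by
    have hdiag : (diagonal fun i => ((μ - hA.eigenvalues i : ℝ) : 𝕜)).PosSemidef :=
      PosSemidef.diagonal fun i => by simpa using hle i
    have hsplit : diagonal (fun i => ((μ - hA.eigenvalues i : ℝ) : 𝕜))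
        = (μ : 𝕜) • 1 - diagonal (RCLike.ofReal ∘ hA.eigenvalues) := by
      ext i j
      by_cases h : i = j <;> simp [h, diagonal, Algebra.algebraMap_eq_smul_one, sub_smul]
    convert hdiag.mul_mul_conjTranspose_same (hA.eigenvectorUnitary : Matrix ι ι 𝕜) using 1
    conv_lhs => rw [hA.spectral_theorem]
    rw [hsplit, Unitary.conjStarAlgAut_apply, mul_sub, sub_mul, mul_smul_comm, mul_one,
      smul_mul_assoc, ← star_eq_conjTranspose,
      mem_unitaryGroup_iff.mp hA.eigenvectorUnitary.2]
  have := hpsd.re_dotProduct_nonneg x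
  simp only [sub_mulVec, smul_mulVec, one_mulVec, dotProduct_sub, dotProduct_smul, map_sub,
    smul_eq_mul, RCLike.re_ofReal_mul] at this
  linarith

end Matrix

namespace BooleanPoly

variable {V : Type*} [DecidableEq V]

def partialEval (g : Finset V → ℝ) (S : Finset V) (y : V → ℝ) : Finset V → ℝ :=
  fun U => if Disjoint U S then ∑ R ∈ S.powerset, g (U ∪ R) * ∏ v ∈ R, y v else 0

lemma partialEval_empty (g : Finset V → ℝ) (S : Finset V) (y : V → ℝ) :
    partialEval g S y ∅ = ∑ R ∈ S.powerset, g R * ∏ v ∈ R, y v := by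
  simp [partialEval]

lemma exists_sdiff_eq_of_partialEval_ne_zero {g : Finset V → ℝ} {S U : Finset V} {y : V → ℝ}
    (h : partialEval g S y U ≠ 0) : ∃ T, g T ≠ 0 ∧ T \ S = U := by
  unfold partialEval at h
  split_ifs at h with hU
  · obtain ⟨R, hR, hne⟩ := exists_ne_zero_of_sum_ne_zero h
    exact ⟨U ∪ R, left_ne_zero_of_mul hne,
      union_sdiff_of_disjoint_of_subset hU (mem_powerset.mp hR)⟩
  · exact absurd rfl h

lemma card_le_of_partialEval_ne_zero {d : ℕ} {g : Finset V → ℝ} (hdeg : ∀ T, g T ≠ 0 → #T ≤ d)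
    (S : Finset V) (y : V → ℝ) (U : Finset V) (h : partialEval g S y U ≠ 0) : #U ≤ d := by
  obtain ⟨T, hT, rfl⟩ := exists_sdiff_eq_of_partialEval_ne_zero h
  exact (card_le_card sdiff_subset).trans (hdeg T hT)

variable [Fintype V]

def eval (g : Finset V → ℝ) (x : V → ℝ) : ℝ := ∑ S, g S * ∏ v ∈ S, x v

/-- The quantity `W(g)` of the greedy bound. -/
def nonconstMass (g : Finset V → ℝ) : ℝ := ∑ S ∈ univ.erase ∅, |g S|

def nonconstSupport (g : Finset V → ℝ) : Finset (Finset V) := {S | S ≠ ∅ ∧ g S ≠ 0}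

def signVectors : Finset (V → ℝ) := Fintype.piFinset fun _ => {1, -1}

lemma mem_signVectors {x : V → ℝ} : x ∈ signVectors ↔ ∀ v, x v = 1 ∨ x v = -1 := by
  simp [signVectors]

lemma piecewise_mem_signVectors {S : Finset V} {x y : V → ℝ} (hy : y ∈ signVectors)
    (hx : x ∈ signVectors) : S.piecewise y x ∈ signVectors := by
  rw [mem_signVectors] at *
  intro v
  by_cases hv : v ∈ S
  · simpa [hv] using hy v
  · simpa [hv] using hx v

lemma abs_prod_of_mem_signVectors {x : V → ℝ} (hx : x ∈ signVectors) (R : Finset V) :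
    |∏ v ∈ R, x v| = 1 := by
  rw [abs_prod]
  exact prod_eq_one fun v _ => by rcases mem_signVectors.mp hx v with h | h <;> simp [h]

lemma prod_mul_prod_eq_prod_sdiff {x : V → ℝ} (hx : x ∈ signVectors) {R S : Finset V}
    (hRS : R ⊆ S) : (∏ v ∈ S, x v) * ∏ v ∈ R, x v = ∏ v ∈ S \ R, x v := by
  have hsq : (∏ v ∈ R, x v) * ∏ v ∈ R, x v = 1 := by
    rw [← abs_mul_self, abs_mul, abs_prod_of_mem_signVectors hx, one_mul]
  rw [← prod_sdiff hRS, mul_assoc, hsq, mul_one]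

lemma sum_signVectors_prod (R : Finset V) :
    ∑ x ∈ (signVectors : Finset (V → ℝ)), ∏ v ∈ R, x v
      = if R = ∅ then (#(signVectors : Finset (V → ℝ)) : ℝ) else 0 := by
  split_ifs with hR
  · simp [hR]
  obtain ⟨v₀, hv₀⟩ := nonempty_iff_ne_empty.mpr hR
  have hext (x : V → ℝ) : ∏ v ∈ R, x v = ∏ v, if v ∈ R then x v else 1 :=
    (Fintype.prod_ite_mem R x).symm
  simp only [hext, signVectors]
  rw [← prod_univ_sum (fun _ => {1, -1}) fun v a => if v ∈ R then a else 1]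
  exact prod_eq_zero (mem_univ v₀) (by norm_num [hv₀])

lemma sum_signVectors_mul_sum_powerset (g : Finset V → ℝ) (S : Finset V) (σ : ℝ) :
    ∑ y ∈ signVectors, (1 + σ * ∏ v ∈ S, y v) * ∑ R ∈ S.powerset, g R * ∏ v ∈ R, y v
      = #(signVectors : Finset (V → ℝ)) * (g ∅ + σ * g S) := by
  set N : ℝ := (#(signVectors : Finset (V → ℝ)) : ℝ)
  calc _ = ∑ R ∈ S.powerset, g R * (∑ y ∈ signVectors, ∏ v ∈ R, y v
        + σ * ∑ y ∈ signVectors, ∏ v ∈ S \ R, y v) := by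
        simp only [mul_sum]
        rw [sum_comm]
        refine sum_congr rfl fun R hR => ?_
        rw [mul_add, mul_sum, mul_sum, ← sum_add_distrib]
        refine sum_congr rfl fun y hy => ?_
        rw [← prod_mul_prod_eq_prod_sdiff hy (mem_powerset.mp hR)]
        ring
    _ = ∑ R ∈ S.powerset, ((if R = ∅ then g R * N else 0) + if R = S then σ * g R * N else 0) := by
        refine sum_congr rfl fun R hR => ?_
        have hRS : S \ R = ∅ ↔ R = S := by
          rw [sdiff_eq_empty_iff_subset]
          exact ⟨(mem_powerset.mp hR).antisymm, fun h => h.ge⟩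
        simp only [sum_signVectors_prod, hRS]
        split_ifs <;> ring
    _ = N * (g ∅ + σ * g S) := by
        rw [sum_add_distrib, sum_ite_eq', sum_ite_eq', if_pos (empty_mem_powerset S),
          if_pos (mem_powerset_self S)]
        ring

lemma exists_mem_signVectors_le_sum_powerset (g : Finset V → ℝ) {S : Finset V} (hS : S ≠ ∅) :
    ∃ y ∈ signVectors, g ∅ + |g S| ≤ ∑ R ∈ S.powerset, g R * ∏ v ∈ R, y v := by
  set σ : ℝ := if 0 ≤ g S then 1 else -1
  have hσg : σ * g S = |g S| := by
    unfold σ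
    split_ifs with h
    · rw [abs_of_nonneg h, one_mul]
    · rw [abs_of_neg (not_le.mp h), neg_one_mul]
  have hσ : |σ| = 1 := by unfold σ; split_ifs <;> simp
  -- `1 + σ ∏_S y` is twice the indicator of the sign patterns with `∏_S y = σ`.
  have hw : ∀ y ∈ signVectors, 0 ≤ 1 + σ * ∏ v ∈ S, y v := fun y hy => by
    have := neg_abs_le (σ * ∏ v ∈ S, y v)
    rw [abs_mul, hσ, abs_prod_of_mem_signVectors hy, mul_one] at this
    linarith
  have hsum_w : ∑ y ∈ signVectors, (1 + σ * ∏ v ∈ S, y v) = #(signVectors : Finset (V → ℝ)) := by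
    rw [sum_add_distrib, ← mul_sum, sum_signVectors_prod, if_neg hS]
    simp
  have hpos : (0 : ℝ) < #(signVectors : Finset (V → ℝ)) :=
    Nat.cast_pos.mpr (card_pos.mpr ⟨1, mem_signVectors.mpr fun _ => Or.inl rfl⟩)
  refine exists_le_of_mul_sum_le_sum_mul hw (hsum_w ▸ hpos) ?_
  rw [hsum_w, sum_signVectors_mul_sum_powerset g S, hσg, mul_comm]

lemma sum_eq_sum_disjoint_sum_powerset {M : Type*} [AddCommMonoid M] (h : Finset V → M)
    (S : Finset V) : ∑ T, h T = ∑ U with Disjoint U S, ∑ R ∈ S.powerset, h (U ∪ R) := by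
  rw [← sum_product']
  symm
  refine sum_nbij' (fun p => p.1 ∪ p.2) (fun T => (T \ S, T ∩ S)) (by simp) ?_ ?_ ?_
    (fun _ _ => rfl)
  · intro T _
    simp [sdiff_disjoint]
  · rintro ⟨U, R⟩ hUR
    simp only [mem_product, mem_filter, mem_univ, true_and, mem_powerset] at hUR
    refine Prod.ext (union_sdiff_of_disjoint_of_subset hUR.1 hUR.2) ?_
    change (U ∪ R) ∩ S = R
    rw [union_inter_distrib_right, disjoint_iff_inter_eq_empty.mp hUR.1, empty_union,
      inter_eq_left.mpr hUR.2]
  · intro T _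
    simp [sdiff_union_inter]

lemma eval_partialEval (g : Finset V → ℝ) (S : Finset V) (y x : V → ℝ) :
    eval (partialEval g S y) x = eval g (S.piecewise y x) := by
  rw [eval, eval]
  conv_rhs => rw [sum_eq_sum_disjoint_sum_powerset _ S]
  simp only [partialEval, ite_mul, zero_mul]
  rw [← sum_filter]
  refine sum_congr rfl fun U hU => ?_
  rw [sum_mul]
  refine sum_congr rfl fun R hR => ?_
  have hU : Disjoint U S := (mem_filter.mp hU).2
  have hR : R ⊆ S := mem_powerset.mp hR
  rw [prod_union (hU.mono_right hR),
    prod_congr rfl fun v hv => S.piecewise_eq_of_notMem y x (disjoint_left.mp hU hv),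
    prod_congr rfl fun v hv => S.piecewise_eq_of_mem y x (hR hv)]
  ring

lemma card_occurrences_partialEval_le {ℓ : ℕ} {g : Finset V → ℝ}
    (hocc : ∀ v, #{T | g T ≠ 0 ∧ v ∈ T} ≤ ℓ) (S : Finset V) (y : V → ℝ) (v : V) :
    #{U | partialEval g S y U ≠ 0 ∧ v ∈ U} ≤ ℓ := by
  refine (card_le_card fun U hU => ?_).trans
    (card_image_le.trans (hocc v) : #(({T | g T ≠ 0 ∧ v ∈ T} : Finset _).image (· \ S)) ≤ ℓ)
  simp only [mem_filter, mem_univ, true_and] at hU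
  obtain ⟨T, hT, rfl⟩ := exists_sdiff_eq_of_partialEval_ne_zero hU.1
  exact mem_image.mpr ⟨T, by simpa [hT] using (mem_sdiff.mp hU.2).1, rfl⟩

lemma card_nonconstSupport_partialEval_lt {g : Finset V → ℝ} {S : Finset V}
    (hS : S ∈ nonconstSupport g) (y : V → ℝ) :
    #(nonconstSupport (partialEval g S y)) < #(nonconstSupport g) := by
  refine (card_le_card fun U hU => ?_).trans_lt
    (card_image_le.trans_lt (card_erase_lt_of_mem hS) :
      #(((nonconstSupport g).erase S).image (· \ S)) < _)
  simp only [nonconstSupport, mem_filter, mem_univ, true_and] at hU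
  obtain ⟨T, hT, rfl⟩ := exists_sdiff_eq_of_partialEval_ne_zero hU.2
  refine mem_image.mpr ⟨T, ?_, rfl⟩
  simp only [nonconstSupport, mem_erase, mem_filter, mem_univ, true_and]
  refine ⟨?_, ?_, hT⟩ <;> rintro rfl <;> simp at hU

lemma abs_le_abs_partialEval_add {g : Finset V → ℝ} {S U : Finset V} {y : V → ℝ}
    (hy : y ∈ signVectors) (hU : Disjoint U S) :
    |g U| ≤ |partialEval g S y U| + ∑ R ∈ S.powerset.erase ∅, |g (U ∪ R)| := by
  have hsplit : partialEval g S y U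
      = g U + ∑ R ∈ S.powerset.erase ∅, g (U ∪ R) * ∏ v ∈ R, y v := by
    rw [partialEval, if_pos hU, ← add_sum_erase _ _ (empty_mem_powerset S)]
    simp
  calc |g U| = |partialEval g S y U - ∑ R ∈ S.powerset.erase ∅, g (U ∪ R) * ∏ v ∈ R, y v| := by
        rw [hsplit, add_sub_cancel_right]
    _ ≤ |partialEval g S y U| + ∑ R ∈ S.powerset.erase ∅, |g (U ∪ R) * ∏ v ∈ R, y v| :=
        (abs_sub _ _).trans (by gcongr; exact abs_sum_le_sum_abs _ _)
    _ = |partialEval g S y U| + ∑ R ∈ S.powerset.erase ∅, |g (U ∪ R)| := by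
        simp only [abs_mul, abs_prod_of_mem_signVectors hy, mul_one]

lemma sum_abs_not_disjoint_eq (g : Finset V → ℝ) (S : Finset V) :
    ∑ T with ¬Disjoint T S, |g T|
      = ∑ U with Disjoint U S, ∑ R ∈ S.powerset.erase ∅, |g (U ∪ R)| := by
  rw [sum_filter, sum_eq_sum_disjoint_sum_powerset _ S]
  refine sum_congr rfl fun U hU => ?_
  rw [← filter_ne', sum_filter]
  refine sum_congr rfl fun R hR => if_congr ?_ rfl rfl
  rw [disjoint_union_left, and_iff_right (mem_filter.mp hU).2, not_iff_not]
  exact ⟨fun h => disjoint_self.mp (h.mono_right (mem_powerset.mp hR)),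
    fun h => h ▸ disjoint_empty_left S⟩

lemma nonconstMass_le_nonconstMass_partialEval_add {g : Finset V → ℝ} {S : Finset V}
    {y : V → ℝ} (hy : y ∈ signVectors) :
    nonconstMass g ≤ nonconstMass (partialEval g S y) + 2 * ∑ T with ¬Disjoint T S, |g T| := by
  have hsplit : nonconstMass g = ∑ T ∈ univ.erase ∅ with Disjoint T S, |g T|
      + ∑ T with ¬Disjoint T S, |g T| := by
    rw [nonconstMass, ← sum_filter_add_sum_filter_not _ (Disjoint · S)]
    congr 2
    ext T
    simp only [mem_filter, mem_erase, mem_univ, and_true, true_and, and_iff_right_iff_imp]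
    rintro h rfl
    exact h (disjoint_empty_left S)
  have hdisj : ∑ T ∈ univ.erase ∅ with Disjoint T S, |g T|
      ≤ nonconstMass (partialEval g S y) + ∑ T with ¬Disjoint T S, |g T| := by
    calc _ ≤ ∑ T ∈ univ.erase ∅ with Disjoint T S, (|partialEval g S y T|
          + ∑ R ∈ S.powerset.erase ∅, |g (T ∪ R)|) :=
          sum_le_sum fun T hT => abs_le_abs_partialEval_add hy (mem_filter.mp hT).2
      _ ≤ nonconstMass (partialEval g S y)
          + ∑ U with Disjoint U S, ∑ R ∈ S.powerset.erase ∅, |g (U ∪ R)| := by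
          rw [sum_add_distrib]
          refine add_le_add
            (sum_le_sum_of_subset_of_nonneg (filter_subset _ _) fun _ _ _ => abs_nonneg _) ?_
          exact sum_le_sum_of_subset_of_nonneg (filter_subset_filter _ (erase_subset _ _))
            fun _ _ _ => sum_nonneg fun _ _ => abs_nonneg _
      _ = _ := by rw [sum_abs_not_disjoint_eq]
  linarith

lemma sum_abs_not_disjoint_le {d ℓ : ℕ} {g : Finset V → ℝ} {S : Finset V}
    (hmax : ∀ T ∈ nonconstSupport g, |g T| ≤ |g S|) (hS : #S ≤ d)
    (hocc : ∀ v, #{T | g T ≠ 0 ∧ v ∈ T} ≤ ℓ) :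
    ∑ T with ¬Disjoint T S, |g T| ≤ d * ℓ * |g S| := by
  have hcard : #{T | ¬Disjoint T S ∧ g T ≠ 0} ≤ d * ℓ := by
    calc #{T | ¬Disjoint T S ∧ g T ≠ 0}
        ≤ #(S.biUnion fun v => {T | g T ≠ 0 ∧ v ∈ T}) := by
          refine card_le_card fun T hT => ?_
          simp only [mem_filter, mem_univ, true_and, not_disjoint_iff] at hT
          obtain ⟨⟨v, hvT, hvS⟩, hT⟩ := hT
          exact mem_biUnion.mpr ⟨v, hvS, by simp [hT, hvT]⟩
      _ ≤ ∑ v ∈ S, #{T | g T ≠ 0 ∧ v ∈ T} := card_biUnion_le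
      _ ≤ #S * ℓ := sum_le_card_nsmul _ _ _ fun v _ => hocc v
      _ ≤ d * ℓ := Nat.mul_le_mul_right ℓ hS
  calc ∑ T with ¬Disjoint T S, |g T| = ∑ T with ¬Disjoint T S ∧ g T ≠ 0, |g T| := by
        rw [← filter_filter, sum_filter_of_ne fun T _ h => abs_ne_zero.mp h]
    _ ≤ #{T | ¬Disjoint T S ∧ g T ≠ 0} • |g S| := by
        refine sum_le_card_nsmul _ _ _ fun T hT => hmax T ?_
        simp only [mem_filter, mem_univ, true_and] at hT
        simp only [nonconstSupport, mem_filter, mem_univ, true_and]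
        refine ⟨?_, hT.2⟩
        rintro rfl
        exact hT.1 (disjoint_empty_left S)
    _ ≤ d * ℓ * |g S| := by
        rw [nsmul_eq_mul]
        gcongr
        exact_mod_cast hcard

lemma eval_eq_of_nonconstSupport_eq_empty {g : Finset V → ℝ} (hg : nonconstSupport g = ∅)
    (x : V → ℝ) : eval g x = g ∅ := by
  rw [eval, sum_eq_single ∅ (fun T _ hT => ?_) (by simp)]
  · simp
  · have : T ∉ nonconstSupport g := hg ▸ notMem_empty T
    simp_all [nonconstSupport]

lemma nonconstMass_eq_zero_of_nonconstSupport_eq_empty {g : Finset V → ℝ}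
    (hg : nonconstSupport g = ∅) : nonconstMass g = 0 :=
  sum_eq_zero fun T hT => by
    have : T ∉ nonconstSupport g := hg ▸ notMem_empty T
    simp_all [nonconstSupport]

theorem exists_mem_signVectors_add_div_le_eval (d ℓ : ℕ) (g : Finset V → ℝ)
    (hdeg : ∀ S, g S ≠ 0 → #S ≤ d) (hocc : ∀ v, #{S | g S ≠ 0 ∧ v ∈ S} ≤ ℓ) :
    ∃ x ∈ signVectors, g ∅ + nonconstMass g / (2 * d * ℓ) ≤ eval g x := by
  induction hN : #(nonconstSupport g) using Nat.strong_induction_on generalizing g with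
  | _ N ih =>
  rcases (nonconstSupport g).eq_empty_or_nonempty with hempty | hne
  · refine ⟨1, mem_signVectors.mpr fun _ => Or.inl rfl, ?_⟩
    rw [eval_eq_of_nonconstSupport_eq_empty hempty,
      nonconstMass_eq_zero_of_nonconstSupport_eq_empty hempty, zero_div, add_zero]
  obtain ⟨S, hS, hmax⟩ := exists_max_image (nonconstSupport g) (fun T => |g T|) hne
  have hS' : S ≠ ∅ ∧ g S ≠ 0 := by simpa [nonconstSupport] using hS
  obtain ⟨y, hy, hy_le⟩ := exists_mem_signVectors_le_sum_powerset g hS'.1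
  obtain ⟨x, hx, hx_le⟩ := ih _ (hN ▸ card_nonconstSupport_partialEval_lt hS y)
    (partialEval g S y) (card_le_of_partialEval_ne_zero hdeg S y)
    (card_occurrences_partialEval_le hocc S y) rfl
  refine ⟨S.piecewise y x, piecewise_mem_signVectors hy hx, ?_⟩
  have hmass : nonconstMass g ≤ nonconstMass (partialEval g S y) + 2 * d * ℓ * |g S| := by
    have := sum_abs_not_disjoint_le hmax (hdeg S hS'.2) hocc
    linarith [nonconstMass_le_nonconstMass_partialEval_add (g := g) (S := S) hy]
  have hdiv : nonconstMass g / (2 * d * ℓ)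
      ≤ nonconstMass (partialEval g S y) / (2 * d * ℓ) + |g S| := by
    rcases (by positivity : (0 : ℝ) ≤ 2 * d * ℓ).eq_or_lt with h0 | hpos
    · simp [← h0]
    · rw [div_add' _ _ _ hpos.ne', div_le_div_iff_of_pos_right hpos]
      linarith
  rw [← eval_partialEval]
  rw [← partialEval_empty] at hy_le
  linarith

end BooleanPoly

/-- Qubit `i` carries the sign variables `(i, false)` and `(i, true)`, the labels `a` and `b` of
its state `tetra a b`; in that state `X, Y, Z` have expectations `3^{-1/2}` times `a, a b, b`. -/
def pauliVars : Fin 4 → Finset Bool := ![∅, {false}, {false, true}, {true}]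

lemma pauliVars_injective : Function.Injective pauliVars := by decide

lemma pauliVars_eq_empty_iff : ∀ j, pauliVars j = ∅ ↔ j = 0 := by decide

section PauliMonomial

variable {n : ℕ}

def pauliMonomial (s : Fin n → Fin 4) : Finset (Fin n × Bool) := {p | p.2 ∈ pauliVars (s p.1)}

lemma mem_pauliMonomial {s : Fin n → Fin 4} {p : Fin n × Bool} :
    p ∈ pauliMonomial s ↔ p.2 ∈ pauliVars (s p.1) := by
  simp [pauliMonomial]

lemma pauliMonomial_injective : Function.Injective (pauliMonomial (n := n)) := by
  intro s t h
  funext i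
  apply pauliVars_injective
  ext c
  simpa only [mem_pauliMonomial] using Finset.ext_iff.mp h (i, c)

lemma ne_zero_of_mem_pauliMonomial {s : Fin n → Fin 4} {p : Fin n × Bool}
    (h : p ∈ pauliMonomial s) : s p.1 ≠ 0 := by
  rintro h0
  simp [mem_pauliMonomial, h0, pauliVars] at h

lemma eq_zero_of_pauliMonomial_eq_empty {s : Fin n → Fin 4} (h : pauliMonomial s = ∅) :
    s = fun _ => 0 := by
  funext i
  rw [← pauliVars_eq_empty_iff, eq_empty_iff_forall_notMem]
  intro c hc
  simpa [h] using (mem_pauliMonomial (s := s) (p := (i, c))).mpr hc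

lemma card_pauliMonomial_le (s : Fin n → Fin 4) : #(pauliMonomial s) ≤ 2 * weight s := by
  calc #(pauliMonomial s) ≤ #(({i | s i ≠ 0} : Finset (Fin n)) ×ˢ (univ : Finset Bool)) :=
        card_le_card fun p hp => by simpa using ne_zero_of_mem_pauliMonomial hp
    _ = 2 * weight s := by rw [card_product, weight, card_univ, Fintype.card_bool, mul_comm]

lemma prod_pauliMonomial {R : Type*} [CommMonoid R] (x : Fin n × Bool → R) (s : Fin n → Fin 4) :
    ∏ p ∈ pauliMonomial s, x p = ∏ i, ∏ c ∈ pauliVars (s i), x (i, c) := by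
  rw [pauliMonomial, prod_filter, Fintype.prod_prod_type]
  exact prod_congr rfl fun i _ => Fintype.prod_ite_mem (pauliVars (s i)) fun c => x (i, c)

/-- The coefficients `f̂_H` of `x ↦ ⟨ψ_x|H|ψ_x⟩` for product tetrahedron states `ψ_x`. -/
def boolCoeff (Hhat : (Fin n → Fin 4) → ℝ) (S : Finset (Fin n × Bool)) : ℝ :=
  ∑ s with pauliMonomial s = S, Hhat s * (√3)⁻¹ ^ weight s

variable {Hhat : (Fin n → Fin 4) → ℝ}

lemma boolCoeff_pauliMonomial (s : Fin n → Fin 4) :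
    boolCoeff Hhat (pauliMonomial s) = Hhat s * (√3)⁻¹ ^ weight s := by
  rw [boolCoeff, sum_eq_single_of_mem s (by simp)]
  intro t ht hts
  exact absurd (pauliMonomial_injective (mem_filter.mp ht).2) hts

lemma exists_of_boolCoeff_ne_zero {S : Finset (Fin n × Bool)} (h : boolCoeff Hhat S ≠ 0) :
    ∃ s, Hhat s ≠ 0 ∧ pauliMonomial s = S := by
  obtain ⟨s, hs, hne⟩ := exists_ne_zero_of_sum_ne_zero h
  exact ⟨s, left_ne_zero_of_mul hne, (mem_filter.mp hs).2⟩

lemma boolCoeff_empty (htr : Hhat (fun _ => 0) = 0) : boolCoeff Hhat ∅ = 0 := by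
  by_contra h
  obtain ⟨s, hs, hs0⟩ := exists_of_boolCoeff_ne_zero h
  exact hs (eq_zero_of_pauliMonomial_eq_empty hs0 ▸ htr)

lemma card_le_of_boolCoeff_ne_zero {k : ℕ} (hdeg : ∀ s, Hhat s ≠ 0 → weight s ≤ k)
    (S : Finset (Fin n × Bool)) (h : boolCoeff Hhat S ≠ 0) : #S ≤ 2 * k := by
  obtain ⟨s, hs, rfl⟩ := exists_of_boolCoeff_ne_zero h
  exact (card_pauliMonomial_le s).trans (Nat.mul_le_mul_left 2 (hdeg s hs))

lemma card_occurrences_boolCoeff_le {ℓ : ℕ}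
    (hℓ : ∀ i, #{s | Hhat s ≠ 0 ∧ s i ≠ 0} ≤ ℓ) (v : Fin n × Bool) :
    #{S | boolCoeff Hhat S ≠ 0 ∧ v ∈ S} ≤ ℓ := by
  refine (card_le_card fun S hS => ?_).trans (card_image_le.trans (hℓ v.1) :
    #(({s | Hhat s ≠ 0 ∧ s v.1 ≠ 0} : Finset _).image pauliMonomial) ≤ ℓ)
  simp only [mem_filter, mem_univ, true_and] at hS
  obtain ⟨s, hs, rfl⟩ := exists_of_boolCoeff_ne_zero hS.1
  exact mem_image.mpr ⟨s, by simp [hs, ne_zero_of_mem_pauliMonomial hS.2], rfl⟩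

lemma pow_mul_sum_abs_le_nonconstMass {k : ℕ} (htr : Hhat (fun _ => 0) = 0)
    (hdeg : ∀ s, Hhat s ≠ 0 → weight s ≤ k) :
    (√3)⁻¹ ^ k * ∑ s, |Hhat s| ≤ BooleanPoly.nonconstMass (boolCoeff Hhat) := by
  have hc : (√3)⁻¹ ≤ 1 := inv_le_one_of_one_le₀ (Real.one_le_sqrt.mpr (by norm_num))
  calc (√3)⁻¹ ^ k * ∑ s, |Hhat s| ≤ ∑ s, |boolCoeff Hhat (pauliMonomial s)| := by
        rw [mul_sum]
        refine sum_le_sum fun s _ => ?_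
        rw [boolCoeff_pauliMonomial, abs_mul,
          abs_of_nonneg (by positivity : (0 : ℝ) ≤ (√3)⁻¹ ^ weight s), mul_comm |Hhat s|]
        rcases eq_or_ne (Hhat s) 0 with hs | hs
        · simp [hs]
        · exact mul_le_mul_of_nonneg_right
            (pow_le_pow_of_le_one (by positivity) hc (hdeg s hs)) (abs_nonneg _)
    _ = ∑ S ∈ univ.image pauliMonomial, |boolCoeff Hhat S| :=
        (sum_image (f := fun S => |boolCoeff Hhat S|) fun _ _ _ _ h =>
          pauliMonomial_injective h).symm
    _ ≤ ∑ S, |boolCoeff Hhat S| := sum_le_sum_of_subset_of_nonneg (subset_univ _)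
        fun _ _ _ => abs_nonneg _
    _ = BooleanPoly.nonconstMass (boolCoeff Hhat) := by
        rw [BooleanPoly.nonconstMass, sum_erase _ (by simp [boolCoeff_empty htr])]

lemma eval_boolCoeff (x : Fin n × Bool → ℝ) :
    BooleanPoly.eval (boolCoeff Hhat) x
      = ∑ s, Hhat s * (√3)⁻¹ ^ weight s * ∏ p ∈ pauliMonomial s, x p := by
  rw [BooleanPoly.eval, ← sum_fiberwise univ pauliMonomial]
  refine sum_congr rfl fun S _ => ?_
  rw [boolCoeff, sum_mul]
  exact sum_congr rfl fun s hs => by rw [(mem_filter.mp hs).2]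

end PauliMonomial

lemma conjTranspose_tetraM_mul_pauli_mul {ε : Bool → ℝ} (hε : ∀ c, ε c = 1 ∨ ε c = -1)
    (j : Fin 4) : (tetraM (ε false) (ε true))ᴴ * pauli j * tetraM (ε false) (ε true)
      = ((∏ c ∈ pauliVars j, ε c : ℝ) : ℂ) • pauli j := by
  rcases hε false with ha | ha <;> rcases hε true with hb | hb <;>
  fin_cases j <;>
  ext i k <;> fin_cases i <;> fin_cases k <;>
  norm_num [ha, hb, tetraM, pauliVars, pauli, σX, σY, σZ, Matrix.mul_apply, Fin.sum_univ_two]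

lemma exp_pi_mul_I_div_four : Complex.exp (Real.pi * I / 4) = ((√2 / 2 : ℝ) : ℂ) * (1 + I) := by
  rw [show (Real.pi : ℂ) * I / 4 = ((Real.pi / 4 : ℝ) : ℂ) * I by push_cast; ring,
    Complex.exp_mul_I, ← Complex.ofReal_cos, ← Complex.ofReal_sin, Real.cos_pi_div_four,
    Real.sin_pi_div_four]
  ring

def ψppA : ℝ := √(3 + √3) / √6

def ψppB : ℝ := √2 / 2 * √(3 - √3) / √6

lemma ψpp_eq : ψpp = ![(ψppA : ℂ), (ψppB : ℂ) * (1 + I)] := by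
  rw [ψpp, exp_pi_mul_I_div_four, ψppA, ψppB]
  push_cast
  ext i
  fin_cases i
  · simp
  · simp only [Fin.mk_one, cons_val_one, cons_val_fin_one]
    ring

lemma ψppA_sq : ψppA ^ 2 = (3 + √3) / 6 := by
  rw [ψppA, div_pow, Real.sq_sqrt (by positivity), Real.sq_sqrt (by norm_num)]

lemma ψppB_sq : ψppB ^ 2 = (3 - √3) / 12 := by
  rw [ψppB, div_pow, mul_pow, div_pow, Real.sq_sqrt (by norm_num),
    Real.sq_sqrt (by nlinarith [Real.sqrt_nonneg 3, Real.sq_sqrt (by norm_num : (0 : ℝ) ≤ 3)]),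
    Real.sq_sqrt (by norm_num)]
  ring

lemma ψppA_mul_ψppB : ψppA * ψppB = √3 / 6 := by
  have h3 : √3 ^ 2 = 3 := Real.sq_sqrt (by norm_num)
  have hroot : √(3 + √3) * √(3 - √3) = √6 := by
    rw [← Real.sqrt_mul (by positivity)]
    congr 1
    linear_combination -h3
  have h26 : √2 * √6 = 2 * √3 := by
    rw [← Real.sqrt_mul (by norm_num),
      show (2 : ℝ) * 6 = (2 * √3) ^ 2 by linear_combination -4 * h3]
    exact Real.sqrt_sq (by positivity)
  rw [show ψppA * ψppB = √2 * (√(3 + √3) * √(3 - √3)) / (2 * (√6 * √6)) by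
      rw [ψppA, ψppB]; ring,
    hroot, h26, Real.mul_self_sqrt (by norm_num)]
  ring

/-- `ψpp` has Bloch vector `(1, 1, 1) / √3`. -/
lemma star_ψpp_dotProduct_pauli_mulVec (j : Fin 4) :
    star ψpp ⬝ᵥ (pauli j *ᵥ ψpp) = ((if j = 0 then 1 else (√3)⁻¹ : ℝ) : ℂ) := by
  have hA : (ψppA : ℂ) ^ 2 = (3 + √3) / 6 := by exact_mod_cast ψppA_sq
  have hB : (ψppB : ℂ) ^ 2 = (3 - √3) / 12 := by exact_mod_cast ψppB_sq
  have hAB : (ψppA : ℂ) * ψppB = √3 / 6 := by exact_mod_cast ψppA_mul_ψppB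
  have hinv : ((√3 : ℝ) : ℂ)⁻¹ = √3 / 3 := by exact_mod_cast Real.sqrt_div_self.symm
  have hI := Complex.I_sq
  rw [ψpp_eq]
  fin_cases j <;>
    simp only [pauli, σX, σY, σZ, dotProduct, mulVec, Fin.sum_univ_two, Pi.star_apply,
      RCLike.star_def, Fin.reduceFinMk, Fin.zero_eta, Fin.mk_one, Matrix.cons_val, cons_val_zero,
      cons_val_one, cons_val_fin_one, of_apply, one_apply, map_mul, map_add, map_one, conj_ofReal,
      conj_I, ↓reduceIte, Fin.isValue, Fin.reduceEq, ofReal_one, ofReal_inv]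
  · linear_combination hA + 2 * hB - (ψppB : ℂ) ^ 2 * hI
  · linear_combination 2 * hAB - hinv
  · linear_combination (-2 * ψppA * ψppB : ℂ) * hI + 2 * hAB - hinv
  · linear_combination hA - 2 * hB + (ψppB : ℂ) ^ 2 * hI - hinv

lemma star_tetra_dotProduct_pauli_mulVec {ε : Bool → ℝ} (hε : ∀ c, ε c = 1 ∨ ε c = -1)
    (j : Fin 4) : star (tetra (ε false) (ε true)) ⬝ᵥ (pauli j *ᵥ tetra (ε false) (ε true))
      = (((if j = 0 then 1 else (√3)⁻¹) * ∏ c ∈ pauliVars j, ε c : ℝ) : ℂ) := by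
  rw [tetra, star_mulVec_dotProduct_mulVec_mulVec, conjTranspose_tetraM_mul_pauli_mul hε,
    smul_mulVec, dotProduct_smul, star_ψpp_dotProduct_pauli_mulVec, smul_eq_mul, mul_comm]
  push_cast
  rfl

lemma sum_norm_sq_tetra {ε : Bool → ℝ} (hε : ∀ c, ε c = 1 ∨ ε c = -1) :
    ∑ b, ‖tetra (ε false) (ε true) b‖ ^ 2 = 1 := by
  have h := congrArg RCLike.re (star_tetra_dotProduct_pauli_mulVec hε 0)
  rw [show pauli 0 = 1 from rfl, one_mulVec, re_star_dotProduct_self] at h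
  simpa [pauliVars] using h

section Expectation

variable {n : ℕ}

lemma expValN_eq_dotProduct (M : Matrix (Fin n → Fin 2) (Fin n → Fin 2) ℂ)
    (Ψ : (Fin n → Fin 2) → ℂ) : expValN M Ψ = star Ψ ⬝ᵥ (M *ᵥ Ψ) := by
  simp [expValN, dotProduct, mulVec, mul_sum, mul_assoc]

lemma re_expValN_le_iSup_eigenvalues {M : Matrix (Fin n → Fin 2) (Fin n → Fin 2) ℂ}
    (hM : M.IsHermitian) {Ψ : (Fin n → Fin 2) → ℂ} (hΨ : ∑ v, ‖Ψ v‖ ^ 2 = 1) :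
    (expValN M Ψ).re ≤ ⨆ v, hM.eigenvalues v := by
  have := hM.re_dotProduct_mulVec_le_iSup_eigenvalues_mul Ψ
  rwa [re_star_dotProduct_self, hΨ, mul_one, ← expValN_eq_dotProduct] at this

lemma expValN_hamOf (Hhat : (Fin n → Fin 4) → ℝ) (Ψ : (Fin n → Fin 2) → ℂ) :
    expValN (hamOf Hhat) Ψ = ∑ s, Hhat s * expValN (pauliString s) Ψ := by
  simp only [expValN_eq_dotProduct, hamOf, sum_mulVec, smul_mulVec, dotProduct_sum,
    dotProduct_smul, smul_eq_mul]

lemma expValN_pauliString_prodState (s : Fin n → Fin 4) (ψ : Fin n → Fin 2 → ℂ) :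
    expValN (pauliString s) (prodState ψ) = ∏ i, star (ψ i) ⬝ᵥ (pauli (s i) *ᵥ ψ i) := by
  simp only [dotProduct, mulVec, mul_sum, Pi.star_apply, Fintype.prod_sum]
  simp only [expValN, prodState, pauliString, map_prod, RCLike.star_def, ← prod_mul_distrib,
    mul_assoc]

lemma sum_norm_sq_prodState {ψ : Fin n → Fin 2 → ℂ} (hψ : ∀ i, ∑ b, ‖ψ i b‖ ^ 2 = 1) :
    ∑ v, ‖prodState ψ v‖ ^ 2 = 1 := by
  simp only [prodState, norm_prod, ← prod_pow]
  rw [← Fintype.prod_sum fun i b => ‖ψ i b‖ ^ 2]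
  simp [hψ]

lemma expValN_hamOf_prodState_tetra (Hhat : (Fin n → Fin 4) → ℝ) {x : Fin n × Bool → ℝ}
    (hx : x ∈ BooleanPoly.signVectors) :
    expValN (hamOf Hhat) (prodState fun i => tetra (x (i, false)) (x (i, true)))
      = BooleanPoly.eval (boolCoeff Hhat) x := by
  have hε (i : Fin n) (c : Bool) : x (i, c) = 1 ∨ x (i, c) = -1 :=
    BooleanPoly.mem_signVectors.mp hx (i, c)
  rw [expValN_hamOf, eval_boolCoeff]
  push_cast
  refine sum_congr rfl fun s _ => ?_
  rw [expValN_pauliString_prodState, prod_congr rfl fun i _ =>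
      star_tetra_dotProduct_pauli_mulVec (ε := fun c => x (i, c)) (hε i) (s i),
    ← Complex.ofReal_prod, prod_mul_distrib, prod_ite, prod_const_one, one_mul, prod_const,
    prod_pauliMonomial]
  push_cast
  rw [weight]
  ring

end Expectation

theorem stmt_15 (n k ℓ : ℕ) (Hhat : (Fin n → Fin 4) → ℝ)
    (hH : (hamOf Hhat).IsHermitian)
    (htr : Hhat (fun _ => 0) = 0)
    (hdeg : ∀ s, Hhat s ≠ 0 → weight s ≤ k)
    (hℓ : ∀ i : Fin n,
      (Finset.univ.filter (fun s : Fin n → Fin 4 => Hhat s ≠ 0 ∧ s i ≠ 0)).card ≤ ℓ) :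
    ((Real.sqrt 3)⁻¹) ^ k * (∑ s : Fin n → Fin 4, |Hhat s|) / (4 * k * ℓ)
        ≤ (⨆ v, hH.eigenvalues v) ∧
    ∃ ψ : Fin n → Fin 2 → ℂ, (∀ i, ∑ b, ‖ψ i b‖ ^ 2 = 1) ∧
      ∃ r : ℝ, expValN (hamOf Hhat) (prodState ψ) = (r : ℂ) ∧
        ((Real.sqrt 3)⁻¹) ^ k * (∑ s : Fin n → Fin 4, |Hhat s|) / (4 * k * ℓ) ≤ r := by
  obtain ⟨x, hx, hx_le⟩ := BooleanPoly.exists_mem_signVectors_add_div_le_eval (2 * k) ℓ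
    (boolCoeff Hhat) (card_le_of_boolCoeff_ne_zero hdeg) (card_occurrences_boolCoeff_le hℓ)
  rw [boolCoeff_empty htr, zero_add] at hx_le
  have hbound : (√3)⁻¹ ^ k * (∑ s, |Hhat s|) / (4 * k * ℓ)
      ≤ BooleanPoly.eval (boolCoeff Hhat) x :=
    calc _ ≤ BooleanPoly.nonconstMass (boolCoeff Hhat) / (2 * (2 * k : ℕ) * ℓ) := by
          rw [show (2 * (2 * k : ℕ) * ℓ : ℝ) = 4 * k * ℓ by push_cast; ring]
          gcongr
          exact pow_mul_sum_abs_le_nonconstMass htr hdeg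
      _ ≤ _ := hx_le
  have hψ (i : Fin n) : ∑ b, ‖tetra (x (i, false)) (x (i, true)) b‖ ^ 2 = 1 :=
    sum_norm_sq_tetra (ε := fun c => x (i, c)) fun c => BooleanPoly.mem_signVectors.mp hx (i, c)
  have hexp := expValN_hamOf_prodState_tetra Hhat hx
  refine ⟨hbound.trans ?_, _, hψ, _, hexp, hbound⟩
  simpa [hexp] using re_expValN_le_iSup_eigenvalues hH (sum_norm_sq_prodState hψ)
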